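/- Fix integers q₁,...,q₅ with q₂,q₃,q₄ > 0, q₅ < 0, and q₁+q₅ < 0, and set q_m = max{q₂,q₃,q₄}. Let B ∈ V, and let h₀ ∈ Sp2 be any element whose second column has first four entries equal to conj(s₅(B))/|s₅(B)|. Then for each ℓ ∈ {2,3,4}, (|(Bh₀)_{ℓ2}|² + |(Bh₀)_{ℓ4}|²) q_ℓ ≤ 2/9. -/

import Mathlib

/-! The first four entries of the second column of `h₀` are the unit vector `conj s₅(B) / |s₅(B)|`,
and the symplectic shape of `h₀` makes its fourth column `(-s₅₃, -s₅₄, s₅₁, s₅₂) / |s₅(B)|`.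
Orthogonality of rows `ℓ` and `5` of `B` turns `(Bh₀)_{ℓ2}` into `-B_{ℓ5} conj(B₅₅) / |s₅(B)|`, and
each of the four products in `(Bh₀)_{ℓ4}` contains one entry of `B` that is small on `V`. With
`ε = 1/(16 √q_m)` the two entries are thus at most `ε/|s₅(B)|` and `4ε/|s₅(B)|`, and with
`|s₅(B)|² > 7/8` and `q_ℓ ≤ q_m` the weighted sum is at most `17/224 < 2/9`. -/

open Finset

noncomputable section

/-- SU(5): 5×5 special unitary complex matrices. -/
def SU5 : Set (Matrix (Fin 5) (Fin 5) ℂ) :=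
  {A | A * A.conjTranspose = 1 ∧ A.det = 1}

/-- The image of the embedding Sp(2) ↪ SU(5). -/
def Sp2 : Set (Matrix (Fin 5) (Fin 5) ℂ) :=
  {h | h ∈ SU5 ∧
    (∀ i : Fin 5, h i 4 = if i = 4 then 1 else 0) ∧
    (∀ i : Fin 5, h 4 i = if i = 4 then 1 else 0) ∧
    (∀ i j : Fin 5, i < 2 → j < 2 →
      h (i + 2) (j + 2) = (starRingEnd ℂ) (h i j) ∧
      h (i + 2) j = -(starRingEnd ℂ) (h i (j + 2)))}

/-- q_m = max{q₂,q₃,q₄} (0-indexed: entries 1,2,3). -/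
def qm (q : Fin 5 → ℤ) : ℤ := max (q 1) (max (q 2) (q 3))

/-- Squared norm of the first four entries of row `i` of `B`. -/
def rowNormSq (B : Matrix (Fin 5) (Fin 5) ℂ) (i : Fin 5) : ℝ :=
  ∑ j : Fin 4, ‖B i j.castSucc‖ ^ 2

/-- The open set V ⊆ SU(5). -/
def V (q : Fin 5 → ℤ) : Set (Matrix (Fin 5) (Fin 5) ℂ) :=
  {B | B ∈ SU5 ∧
    (∀ i j : Fin 5, (i, j) ∉ ({(0,0),(1,1),(2,3),(3,4),(4,2)} : Set (Fin 5 × Fin 5)) →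
      ‖B i j‖ < 1 / (16 * Real.sqrt (qm q))) ∧
    7 / 8 < rowNormSq B 4 ∧
    Real.sqrt (rowNormSq B 0) < Real.sqrt (rowNormSq B 4) ∧
    0 < ∑ ℓ : Fin 5, (‖B ℓ 1‖ ^ 2 + ‖B ℓ 3‖ ^ 2) * (q ℓ : ℝ)}

open ComplexConjugate

lemma sum_mul_conj_eq_zero_of_mem_unitaryGroup {n : Type*} [Fintype n] [DecidableEq n]
    {A : Matrix n n ℂ} (hA : A ∈ Matrix.unitaryGroup n ℂ) {i j : n} (hij : i ≠ j) :
    ∑ k, A i k * conj (A j k) = 0 := by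
  simpa [Matrix.mul_apply, hij] using congrFun (congrFun (Matrix.mem_unitaryGroup_iff.mp hA) i) j

lemma SU5.mem_unitaryGroup {A : Matrix (Fin 5) (Fin 5) ℂ} (hA : A ∈ SU5) :
    A ∈ Matrix.unitaryGroup (Fin 5) ℂ :=
  Matrix.mem_unitaryGroup_iff.mpr hA.1

namespace Sp2

variable {h : Matrix (Fin 5) (Fin 5) ℂ}

lemma apply_four_eq_zero (hh : h ∈ Sp2) {j : Fin 5} (hj : j ≠ 4) : h 4 j = 0 := by
  simpa [hj] using hh.2.2.1 j

lemma apply_three (hh : h ∈ Sp2) :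
    h 0 3 = -conj (h 2 1) ∧ h 1 3 = -conj (h 3 1) ∧ h 2 3 = conj (h 0 1) ∧ h 3 3 = conj (h 1 1) := by
  obtain ⟨h23, h21⟩ := hh.2.2.2 0 1 (by decide) (by decide)
  obtain ⟨h33, h31⟩ := hh.2.2.2 1 1 (by decide) (by decide)
  simp only [show (0 : Fin 5) + 2 = 2 by decide, show (1 : Fin 5) + 2 = 3 by decide] at h23 h21 h33 h31
  refine ⟨?_, ?_, h23, h33⟩
  · rw [h21, map_neg, Complex.conj_conj, neg_neg]
  · rw [h31, map_neg, Complex.conj_conj, neg_neg]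

variable (B : Matrix (Fin 5) (Fin 5) ℂ)

lemma mul_apply_one (hh : h ∈ Sp2) (ℓ : Fin 5) :
    (B * h) ℓ 1 = ∑ k : Fin 4, B ℓ k.castSucc * h k.castSucc 1 := by
  rw [Matrix.mul_apply, Fin.sum_univ_castSucc,
    show h (Fin.last 4) 1 = 0 from apply_four_eq_zero hh (by decide), mul_zero, add_zero]

lemma mul_apply_three (hh : h ∈ Sp2) (ℓ : Fin 5) :
    (B * h) ℓ 3 = -(B ℓ 0 * conj (h 2 1)) + -(B ℓ 1 * conj (h 3 1))
      + B ℓ 2 * conj (h 0 1) + B ℓ 3 * conj (h 1 1) := by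
  obtain ⟨h03, h13, h23, h33⟩ := apply_three hh
  rw [Matrix.mul_apply, Fin.sum_univ_five, h03, h13, h23, h33, apply_four_eq_zero hh (by decide)]
  ring

end Sp2

section SecondAndFourthColumn

variable {B h : Matrix (Fin 5) (Fin 5) ℂ} {N : ℝ}

lemma norm_mul_apply_one_le (hU : B ∈ Matrix.unitaryGroup (Fin 5) ℂ) (hh : h ∈ Sp2) (hN : 0 < N)
    (hcol : ∀ i : Fin 4, h i.castSucc 1 = conj (B 4 i.castSucc) / (N : ℂ)) {ℓ : Fin 5}
    (hℓ : ℓ ≠ 4) : ‖(B * h) ℓ 1‖ ≤ ‖B 4 4‖ / N := by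
  have horth := sum_mul_conj_eq_zero_of_mem_unitaryGroup hU hℓ
  rw [Fin.sum_univ_castSucc] at horth
  have hentry : (B * h) ℓ 1 = -(B ℓ 4 * conj (B 4 4)) / (N : ℂ) := by
    simp only [Sp2.mul_apply_one B hh, hcol, mul_div_assoc', ← Finset.sum_div]
    rw [eq_neg_of_add_eq_zero_left horth]
    rfl
  rw [hentry, norm_div, norm_neg, norm_mul, Complex.norm_conj, Complex.norm_real,
    Real.norm_of_nonneg hN.le]
  gcongr
  exact mul_le_of_le_one_left (norm_nonneg _) (entry_norm_bound_of_unitary hU ℓ 4)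

lemma norm_mul_apply_three_le (hU : B ∈ Matrix.unitaryGroup (Fin 5) ℂ) (hh : h ∈ Sp2)
    (hN : 0 < N) (hcol : ∀ i : Fin 4, h i.castSucc 1 = conj (B 4 i.castSucc) / (N : ℂ))
    (ℓ : Fin 5) : ‖(B * h) ℓ 3‖ ≤ (‖B ℓ 0‖ + ‖B 4 3‖ + ‖B 4 0‖ + ‖B 4 1‖) / N := by
  have hconj (k : Fin 5) (hk : k ≠ 4) : conj (h k 1) = B 4 k / (N : ℂ) := by
    obtain ⟨i, rfl⟩ := Fin.exists_castSucc_eq.mpr hk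
    rw [hcol, map_div₀, Complex.conj_conj, Complex.conj_ofReal]
  have hle (i j k l : Fin 5) : ‖B i j * (B k l / (N : ℂ))‖ ≤ ‖B k l‖ / N := by
    rw [norm_mul, norm_div, Complex.norm_real, Real.norm_of_nonneg hN.le]
    exact mul_le_of_le_one_left (by positivity) (entry_norm_bound_of_unitary hU i j)
  have hle' (i j k l : Fin 5) : ‖B i j * (B k l / (N : ℂ))‖ ≤ ‖B i j‖ / N := by
    rw [norm_mul, norm_div, Complex.norm_real, Real.norm_of_nonneg hN.le, mul_div_assoc']
    gcongr
    exact mul_le_of_le_one_right (norm_nonneg _) (entry_norm_bound_of_unitary hU k l)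
  rw [Sp2.mul_apply_three B hh, hconj 0 (by decide), hconj 1 (by decide),
    hconj 2 (by decide), hconj 3 (by decide)]
  refine norm_add₄_le.trans ?_
  simp only [norm_neg, add_div]
  gcongr
  exacts [hle' _ _ _ _, hle _ _ _ _, hle _ _ _ _, hle _ _ _ _]

end SecondAndFourthColumn

lemma weighted_sum_sq_le_of_le {x y ε N q Q : ℝ} (hx : 0 ≤ x) (hy : 0 ≤ y) (hxε : x ≤ ε / N)
    (hyε : y ≤ 4 * ε / N) (hN : 7 / 8 < N ^ 2) (hqQ : q ≤ Q) (hεQ : ε ^ 2 * Q = 1 / 256) :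
    (x ^ 2 + y ^ 2) * q ≤ 2 / 9 := by
  have hNpos : 0 < N ^ 2 := by linarith
  have hsum : x ^ 2 + y ^ 2 ≤ 17 * ε ^ 2 / N ^ 2 :=
    calc x ^ 2 + y ^ 2 ≤ (ε / N) ^ 2 + (4 * ε / N) ^ 2 :=
          add_le_add (pow_le_pow_left₀ hx hxε 2) (pow_le_pow_left₀ hy hyε 2)
      _ = 17 * ε ^ 2 / N ^ 2 := by ring
  calc (x ^ 2 + y ^ 2) * q ≤ (x ^ 2 + y ^ 2) * Q := by gcongr
    _ ≤ 17 * ε ^ 2 / N ^ 2 * Q := by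
        gcongr
        nlinarith [sq_nonneg ε]
    _ = 17 / 256 / N ^ 2 := by rw [mul_div_right_comm, mul_assoc, hεQ]; ring
    _ ≤ 2 / 9 := by rw [div_le_iff₀ hNpos]; linarith

-- If `q_m ≤ 0` then `√q_m = 0`, the bound `1 / (16 * 0) = 0` is unattainable and `V q` is empty.
lemma sq_mul_qm_of_mem_V {q : Fin 5 → ℤ} {B : Matrix (Fin 5) (Fin 5) ℂ} (hB : B ∈ V q) :
    (1 / (16 * Real.sqrt (qm q))) ^ 2 * qm q = 1 / 256 := by
  have hpos : 0 < 1 / (16 * Real.sqrt (qm q)) :=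
    (norm_nonneg _).trans_lt (hB.2.1 4 4 (by simp [Prod.ext_iff]))
  have hqm : (0 : ℝ) < qm q := Real.sqrt_pos.mp (by nlinarith [one_div_pos.mp hpos])
  rw [div_pow, mul_pow, Real.sq_sqrt hqm.le]
  field_simp
  norm_num

theorem stmt12_general (q : Fin 5 → ℤ)
    (B : Matrix (Fin 5) (Fin 5) ℂ) (hB : B ∈ V q)
    (h₀ : Matrix (Fin 5) (Fin 5) ℂ) (hh₀ : h₀ ∈ Sp2)
    (hcol : ∀ i : Fin 4, h₀ i.castSucc 1 =
      (starRingEnd ℂ) (B 4 i.castSucc) / (Real.sqrt (rowNormSq B 4) : ℂ)) :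
    ∀ ℓ : Fin 5, (ℓ = 1 ∨ ℓ = 2 ∨ ℓ = 3) →
      (‖(B * h₀) ℓ 1‖ ^ 2 + ‖(B * h₀) ℓ 3‖ ^ 2) * (q ℓ : ℝ) ≤ 2 / 9 := by
  intro ℓ hℓ
  have hU := SU5.mem_unitaryGroup hB.1
  have hS : 7 / 8 < rowNormSq B 4 := hB.2.2.1
  have hN2 : 7 / 8 < Real.sqrt (rowNormSq B 4) ^ 2 := by rwa [Real.sq_sqrt (by linarith)]
  have hN : 0 < Real.sqrt (rowNormSq B 4) := Real.sqrt_pos.mpr (by linarith)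
  have hqℓ : (q ℓ : ℝ) ≤ qm q := by
    unfold qm
    rcases hℓ with rfl | rfl | rfl <;> push_cast <;> simp
  have small (i j : Fin 5)
      (hij : (i, j) ∉ ({(0,0),(1,1),(2,3),(3,4),(4,2)} : Set (Fin 5 × Fin 5))) :=
    (hB.2.1 i j hij).le
  refine weighted_sum_sq_le_of_le (norm_nonneg _) (norm_nonneg _) ?_ ?_ hN2 hqℓ
    (sq_mul_qm_of_mem_V hB)
  · refine (norm_mul_apply_one_le hU hh₀ hN hcol ?_).trans ?_
    · rcases hℓ with rfl | rfl | rfl <;> decide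
    · gcongr
      exact small 4 4 (by simp [Prod.ext_iff])
  · refine (norm_mul_apply_three_le hU hh₀ hN hcol ℓ).trans ?_
    have hℓ0 := small ℓ 0 (by rcases hℓ with rfl | rfl | rfl <;> simp [Prod.ext_iff])
    have h43 := small 4 3 (by simp [Prod.ext_iff])
    have h40 := small 4 0 (by simp [Prod.ext_iff])
    have h41 := small 4 1 (by simp [Prod.ext_iff])
    gcongr
    linarith

theorem stmt12 (q : Fin 5 → ℤ) (h2 : 0 < q 1) (h3 : 0 < q 2) (h4 : 0 < q 3)
    (h5 : q 4 < 0) (h15 : q 0 + q 4 < 0)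
    (B : Matrix (Fin 5) (Fin 5) ℂ) (hB : B ∈ V q)
    (h₀ : Matrix (Fin 5) (Fin 5) ℂ) (hh₀ : h₀ ∈ Sp2)
    (hcol : ∀ i : Fin 4, h₀ i.castSucc 1 =
      (starRingEnd ℂ) (B 4 i.castSucc) / (Real.sqrt (rowNormSq B 4) : ℂ)) :
    ∀ ℓ : Fin 5, (ℓ = 1 ∨ ℓ = 2 ∨ ℓ = 3) →
      (‖(B * h₀) ℓ 1‖ ^ 2 + ‖(B * h₀) ℓ 3‖ ^ 2) * (q ℓ : ℝ) ≤ 2 / 9 :=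
  stmt12_general q B hB h₀ hh₀ hcol
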